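/- arXiv:math/0603386 — 6 statements merged into one kernel-verified Lean document; each statement's English description precedes it below -/
import Mathlib

section
/- Let R be a commutative ℚ-algebra, A an associative unital R-algebra, M an A-bimodule symmetric over R, and C a commutative R-subalgebra of A. Then for every m ∈ M and p ∈ ℕ, the following are equivalent: (i) ad_c^{p+1}(m) = 0 for all c ∈ C; (ii) ad_{c_0}(ad_{c_1}(⋯ ad_{c_p}(m)⋯)) = 0 for all c_0, …, c_p ∈ C. (Polarization identity giving the two equivalent descriptions of the filtration F^C_p M.) -/
/- STATEMENT 2: (Polarization.) Over a commutative `ℚ`-algebra `R`, for an `A`-bimodule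
`M` symmetric over `R` and a commutative subalgebra `C ⊆ A`, for every `m ∈ M` and
`p ∈ ℕ` the following are equivalent:
(i)  `ad_c^{p+1}(m) = 0` for all `c ∈ C`;
(ii) `ad_{c_0}(ad_{c_1}(⋯ ad_{c_p}(m)⋯)) = 0` for all `c_0, …, c_p ∈ C`. -/

variable {R A M : Type*} [CommRing R] [Algebra ℚ R] [Ring A] [Algebra R A]
  [AddCommGroup M] [Module A M] [Module Aᵐᵒᵖ M] [SMulCommClass A Aᵐᵒᵖ M]
  [Module R M] [IsScalarTower R A M] [IsScalarTower R Aᵐᵒᵖ M]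

/-- `ad_a(m) = a·m − m·a` on the bimodule `M`. -/
def adM (a : A) (m : M) : M := a • m - MulOpposite.op a • m

/-- Iterated adjoint `ad_{c_0}(ad_{c_1}(⋯ ad_{c_k}(m)⋯))` for a list `[c_0, …, c_k]`. -/
def adIter : List A → M → M
  | [], m => m
  | a :: l, m => adM a (adIter l m)


set_option linter.unusedSectionVars false

section Aux

open MulOpposite

lemma smul_comm_aux (r : R) (a : A) (m : M) : a • r • m = r • a • m := by
  rw [← algebraMap_smul A r m, ← mul_smul, ← Algebra.commutes r a, mul_smul, algebraMap_smul]

lemma smul_comm_aux' (r : R) (a : A) (m : M) : (op a) • r • m = r • (op a) • m := by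
  rw [← algebraMap_smul Aᵐᵒᵖ r m, ← mul_smul, ← Algebra.commutes r (op a), mul_smul,
    algebraMap_smul]

variable (R M) in
/-- `adM a` as an `R`-linear endomorphism of `M`. -/
def adL (a : A) : Module.End R M where
  toFun := adM a
  map_add' x y := by simp only [adM, smul_add]; abel
  map_smul' r x := by simp only [adM, RingHom.id_apply, smul_sub, smul_comm_aux, smul_comm_aux']

@[simp] lemma adL_apply (a : A) (m : M) : adL R M a m = adM a m := rfl

lemma adL_add (a b : A) : adL R M (a + b) = adL R M a + adL R M b := by
  ext m; simp only [adL, LinearMap.coe_mk, AddHom.coe_mk, LinearMap.add_apply, adM, op_add,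
    add_smul]
  abel

lemma adL_smul (r : R) (a : A) : adL R M (r • a) = r • adL R M a := by
  ext m
  simp only [adL, LinearMap.coe_mk, AddHom.coe_mk, LinearMap.smul_apply, adM, op_smul,
    smul_assoc, smul_sub]

lemma adL_comm {a b : A} (hab : a * b = b * a) :
    Commute (adL R M a) (adL R M b) := by
  ext m
  simp only [Module.End.mul_apply, adL_apply, adM, smul_sub, op_mul]
  rw [← mul_smul a b, ← mul_smul b a, hab, smul_comm a (op b), smul_comm b (op a),
    ← mul_smul (op a) (op b), ← mul_smul (op b) (op a), ← op_mul, ← op_mul, hab]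
  abel

lemma adL_pow_apply (a : A) (n : ℕ) (m : M) : (adL R M a ^ n) m = (adM a)^[n] m := by
  induction n generalizing m with
  | zero => simp
  | succ k ih => rw [pow_succ, Module.End.mul_apply, Function.iterate_succ_apply, adL_apply, ih]

open Finset Polynomial in
/-- In a `ℚ`-vector space, if a "polynomial" expression vanishes at every rational point,
then all its coefficients vanish. -/
lemma coeffs_zero' {V : Type*} [AddCommGroup V] [Module ℚ V] (n : ℕ) (v : ℕ → V)
    (h : ∀ q : ℚ, ∑ j ∈ Finset.range (n + 1), q ^ j • v j = 0) :
    ∀ j ≤ n, v j = 0 := by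
  intro j hj
  rw [← Module.forall_dual_apply_eq_zero_iff ℚ]
  intro φ
  set P : ℚ[X] := ∑ i ∈ range (n + 1), C (φ (v i)) * X ^ i with hP
  have heval : ∀ q : ℚ, P.eval q = 0 := by
    intro q
    have h2 := congrArg φ (h q)
    rw [map_sum] at h2
    rw [hP, eval_finset_sum]
    simp only [eval_mul, eval_C, eval_pow, eval_X]
    simp only [map_smul, smul_eq_mul] at h2
    simpa [mul_comm] using h2
  have hP0 : P = 0 := Polynomial.funext (q := 0) (by simpa using heval)
  have h3 := congrArg (fun p => Polynomial.coeff p j) hP0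
  simp only [hP, finset_sum_coeff, coeff_C_mul, coeff_X_pow, mul_ite, mul_one, mul_zero,
    Polynomial.coeff_zero] at h3
  rwa [Finset.sum_ite_eq (range (n+1)) j (fun i => φ (v i)),
    if_pos (by simpa [Nat.lt_succ_iff])] at h3

open Finset in
/-- Polarization step: if `ad_c^{n+1}(m) = 0` for every `c ∈ C`, then
`ad_c^{n}(ad_{c₀}(m)) = 0` for all `c₀, c ∈ C`. -/
lemma key (C : Subalgebra R A) (hC : ∀ x ∈ C, ∀ y ∈ C, x * y = y * x)
    (m : M) (n : ℕ) (h : ∀ c ∈ C, (adM c)^[n + 1] m = 0) :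
    ∀ c0 ∈ C, ∀ c ∈ C, (adM c)^[n] (adM c0 m) = 0 := by
  letI : Module ℚ M := Module.compHom M (algebraMap ℚ R)
  have hqs : ∀ (q : ℚ) (x : M), q • x = algebraMap ℚ R q • x := fun _ _ => rfl
  intro c0 hc0 c hc
  set D := adL R M c with hD
  set E := adL R M c0 with hE
  have hDE : Commute D E := adL_comm (hC c hc c0 hc0)
  set v : ℕ → M := fun j => (n + 1).choose j • (D ^ (n + 1 - j)) ((E ^ j) m) with hv
  have hsum : ∀ q : ℚ, ∑ j ∈ range (n + 2), q ^ j • v j = 0 := by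
    intro q
    set r : R := algebraMap ℚ R q with hr
    have hmem : c + r • c0 ∈ C := C.add_mem hc (C.smul_mem hc0 r)
    have h0 : ((adL R M (c + r • c0)) ^ (n + 1)) m = 0 := by
      rw [adL_pow_apply]; exact h _ hmem
    rw [adL_add, adL_smul, ← hD, ← hE] at h0
    have hDE' : Commute D (r • E) := hDE.smul_right r
    rw [hDE'.add_pow, LinearMap.sum_apply] at h0
    have hterm : ∀ k ∈ range (n + 2),
        (D ^ k * (r • E) ^ (n + 1 - k) * ((n + 1).choose k : Module.End R M)) m
          = q ^ (n + 1 - k) • v (n + 1 - k) := by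
      intro k hk
      have hk' : k ≤ n + 1 := by simpa [Nat.lt_succ_iff] using hk
      rw [smul_pow, hqs, map_pow, ← hr]
      rw [(Nat.commute_cast (D ^ k * (r ^ (n + 1 - k) • E ^ (n + 1 - k))) ((n + 1).choose k)).eq]
      rw [Module.End.mul_apply, Module.End.mul_apply, LinearMap.smul_apply, LinearMap.map_smul,
        Module.End.natCast_apply]
      rw [hv]
      simp only
      rw [Nat.choose_symm hk', Nat.sub_sub_self hk']
      rw [smul_comm]
    rw [Finset.sum_congr rfl hterm] at h0
    have := Finset.sum_range_reflect (fun j => q ^ j • v j) (n + 2)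
    calc ∑ j ∈ range (n + 2), q ^ j • v j
        = ∑ k ∈ range (n + 2), q ^ (n + 1 - k) • v (n + 1 - k) := this.symm
      _ = 0 := h0
  have hv1 : v 1 = 0 := coeffs_zero' (n + 1) v hsum 1 (by omega)
  rw [hv] at hv1
  simp only [Nat.choose_one_right, Nat.add_sub_cancel] at hv1
  have h2 : ((n + 1 : ℚ)) • (D ^ n) (E m) = 0 := by
    rw [← Nat.cast_smul_eq_nsmul ℚ] at hv1
    exact_mod_cast hv1
  have h3 : (D ^ n) (E m) = 0 := by
    have := congrArg (fun x => ((n + 1 : ℚ))⁻¹ • x) h2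
    simpa [smul_smul, inv_mul_cancel₀ (show ((n : ℚ) + 1) ≠ 0 by positivity)] using this
  rw [← adL_pow_apply (R := R) c n (adM c0 m)]
  exact h3

lemma adIter_append (l₁ l₂ : List A) (m : M) :
    adIter (l₁ ++ l₂) m = adIter l₁ (adIter l₂ m) := by
  induction l₁ with
  | nil => rfl
  | cons a l ih => simp [adIter, ih]

lemma adIter_replicate (n : ℕ) (a : A) (m : M) :
    adIter (List.replicate n a) m = (adM a)^[n] m := by
  induction n generalizing m with
  | zero => rfl
  | succ k ih =>
    rw [List.replicate_succ, Function.iterate_succ_apply]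
    show adM a (adIter (List.replicate k a) m) = _
    rw [ih]
    rw [← Function.iterate_succ_apply, Function.iterate_succ_apply']

end Aux

theorem filtration_polarization (C : Subalgebra R A)
    (hC : ∀ x ∈ C, ∀ y ∈ C, x * y = y * x)
    (m : M) (p : ℕ) :
    (∀ c ∈ C, (adM c)^[p + 1] m = 0) ↔
      (∀ c : Fin (p + 1) → A, (∀ i, c i ∈ C) → adIter (List.ofFn c) m = 0) := by
  constructor
  · intro h
    induction p generalizing m with
    | zero =>
      intro c hcmem
      have h1 := h (c 0) (hcmem 0)
      simpa [List.ofFn_succ, adIter] using h1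
    | succ n ih =>
      intro c hcmem
      rw [List.ofFn_succ', List.concat_eq_append, adIter_append]
      have hlast : adIter [c (Fin.last (n + 1))] m = adM (c (Fin.last (n + 1))) m := rfl
      rw [hlast]
      refine ih (adM (c (Fin.last (n + 1))) m) ?_ (fun i => c i.castSucc)
        (fun i => hcmem _)
      intro c' hc'
      exact key C hC m (n + 1) h (c (Fin.last (n + 1))) (hcmem _) c' hc'
  · intro h c hc
    have h1 := h (fun _ => c) (fun _ => hc)
    rwa [List.ofFn_const, adIter_replicate] at h1
end

section
/- Let A be an associative unital algebra over a commutative ring R, M an A-bimodule symmetric over R, and C a commutative R-subalgebra of A. Define F^C_p M = {m ∈ M | ∀ c ∈ C, ad_c^{p+1}(m) = 0} and F^C_p A = {a ∈ A | ∀ c ∈ C, ad_c^{p+1}(a) = 0}. Then for all p₀, p₁ ∈ ℕ: if m ∈ F^C_{p₀} M and a ∈ F^C_{p₁} A, then m·a ∈ F^C_{p₀+p₁} M and a·m ∈ F^C_{p₀+p₁} M. In particular (taking M = A) the filtration F^C on A is multiplicative: F^C_{p₀}A · F^C_{p₁}A ⊆ F^C_{p₀+p₁}A. -/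
/- STATEMENT 5: With `F^C_p M = {m | ∀ c ∈ C, ad_c^{p+1}(m) = 0}` and
`F^C_p A = {a | ∀ c ∈ C, ad_c^{p+1}(a) = 0}`, for all `p₀, p₁`:
`m ∈ F^C_{p₀}M` and `a ∈ F^C_{p₁}A` imply `m·a, a·m ∈ F^C_{p₀+p₁}M`.
In particular the filtration on `A` is multiplicative:
`F^C_{p₀}A · F^C_{p₁}A ⊆ F^C_{p₀+p₁}A`. -/

variable {R A M : Type*} [CommRing R] [Ring A] [Algebra R A]
  [AddCommGroup M] [Module A M] [Module Aᵐᵒᵖ M] [SMulCommClass A Aᵐᵒᵖ M]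
  [Module R M] [IsScalarTower R A M] [IsScalarTower R Aᵐᵒᵖ M]

/-- `ad_c(a) = ca − ac` on the algebra `A`. -/
def adA (c a : A) : A := c * a - a * c

set_option linter.unusedSectionVars false

lemma adM_add (c : A) (x y : M) : adM c (x + y) = adM c x + adM c y := by
  simp only [adM, smul_add]; abel

lemma adM_zero (c : A) : adM c (0 : M) = 0 := by simp [adM]

lemma iter_adM_add (c : A) (n : ℕ) (x y : M) :
    (adM c)^[n] (x + y) = (adM c)^[n] x + (adM c)^[n] y := by
  induction n with
  | zero => simp
  | succ n ih =>
    rw [Function.iterate_succ_apply', ih, adM_add,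
      ← Function.iterate_succ_apply' (adM c) n x, ← Function.iterate_succ_apply' (adM c) n y]

lemma iter_adM_zero (c : A) (n : ℕ) : (adM c)^[n] (0 : M) = 0 := by
  induction n with
  | zero => simp
  | succ n ih => simp [Function.iterate_succ_apply, adM_zero, ih]

lemma adM_smul (c a : A) (m : M) :
    adM c (a • m) = (adA c a) • m + a • adM c m := by
  simp only [adM, adA, smul_sub, sub_smul, mul_smul, smul_comm a (MulOpposite.op c) m]
  abel

lemma adM_op_smul (c a : A) (m : M) :
    adM c (MulOpposite.op a • m) =
      MulOpposite.op (adA c a) • m + MulOpposite.op a • adM c m := by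
  have h1 : MulOpposite.op c • MulOpposite.op a • m = MulOpposite.op (a * c) • m := by
    rw [← mul_smul]; rfl
  have h2 : MulOpposite.op (c * a) • m = MulOpposite.op a • MulOpposite.op c • m := by
    rw [← mul_smul]; rfl
  simp only [adM, adA, smul_sub, MulOpposite.op_sub, sub_smul, h1, h2,
    smul_comm c (MulOpposite.op a) m]
  abel

lemma key_smul (c : A) (n : ℕ) : ∀ j k, j + k = n → ∀ (m : M) (a : A),
    (adM c)^[j + 1] m = 0 → (adA c)^[k + 1] a = 0 →
    (adM c)^[n + 1] (a • m) = 0 := by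
  induction n with
  | zero =>
    rintro j k hjk m a hm ha
    obtain ⟨rfl, rfl⟩ : j = 0 ∧ k = 0 := by omega
    simp only [zero_add, Function.iterate_one] at *
    rw [adM_smul, ha, hm, zero_smul, smul_zero, add_zero]
  | succ n ih =>
    rintro j k hjk m a hm ha
    rw [show n + 1 + 1 = n + 1 + 1 from rfl, Function.iterate_succ_apply, adM_smul,
      iter_adM_add]
    have h1 : (adM c)^[n + 1] ((adA c) a • m) = 0 := by
      rcases Nat.eq_zero_or_pos k with hk | hk
      · subst hk
        simp only [zero_add, Function.iterate_one] at ha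
        rw [ha, zero_smul, iter_adM_zero]
      · exact ih j (k - 1) (by omega) m _ hm
          (by rw [show k - 1 + 1 = k from by omega, ← Function.iterate_succ_apply]; exact ha)
    have h2 : (adM c)^[n + 1] (a • adM c m) = 0 := by
      rcases Nat.eq_zero_or_pos j with hj | hj
      · subst hj
        simp only [zero_add, Function.iterate_one] at hm
        rw [hm, smul_zero, iter_adM_zero]
      · exact ih (j - 1) k (by omega) _ a
          (by rw [show j - 1 + 1 = j from by omega, ← Function.iterate_succ_apply]; exact hm) ha
    rw [h1, h2, add_zero]

lemma key_op_smul (c : A) (n : ℕ) : ∀ j k, j + k = n → ∀ (m : M) (a : A),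
    (adM c)^[j + 1] m = 0 → (adA c)^[k + 1] a = 0 →
    (adM c)^[n + 1] (MulOpposite.op a • m) = 0 := by
  induction n with
  | zero =>
    rintro j k hjk m a hm ha
    obtain ⟨rfl, rfl⟩ : j = 0 ∧ k = 0 := by omega
    simp only [zero_add, Function.iterate_one] at *
    rw [adM_op_smul, ha, hm, MulOpposite.op_zero, zero_smul, smul_zero, add_zero]
  | succ n ih =>
    rintro j k hjk m a hm ha
    rw [Function.iterate_succ_apply, adM_op_smul, iter_adM_add]
    have h1 : (adM c)^[n + 1] (MulOpposite.op ((adA c) a) • m) = 0 := by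
      rcases Nat.eq_zero_or_pos k with hk | hk
      · subst hk
        simp only [zero_add, Function.iterate_one] at ha
        rw [ha, MulOpposite.op_zero, zero_smul, iter_adM_zero]
      · exact ih j (k - 1) (by omega) m _ hm
          (by rw [show k - 1 + 1 = k from by omega, ← Function.iterate_succ_apply]; exact ha)
    have h2 : (adM c)^[n + 1] (MulOpposite.op a • adM c m) = 0 := by
      rcases Nat.eq_zero_or_pos j with hj | hj
      · subst hj
        simp only [zero_add, Function.iterate_one] at hm
        rw [hm, smul_zero, iter_adM_zero]
      · exact ih (j - 1) k (by omega) _ a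
          (by rw [show j - 1 + 1 = j from by omega, ← Function.iterate_succ_apply]; exact hm) ha
    rw [h1, h2, add_zero]

lemma adM_eq_adA (c a : A) : adM c a = adA c a := by
  simp [adM, adA, MulOpposite.smul_eq_mul_unop, smul_eq_mul]

/-- The filtration `F^C_p M` on the bimodule `M`. -/
def FM (C : Subalgebra R A) (p : ℕ) : Set M :=
  {m | ∀ c ∈ C, (adM c)^[p + 1] m = 0}

/-- The filtration `F^C_p A` on the algebra `A`. -/
def FA (C : Subalgebra R A) (p : ℕ) : Set A :=
  {a | ∀ c ∈ C, (adA c)^[p + 1] a = 0}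

theorem filtration_multiplicative (C : Subalgebra R A)
    (hC : ∀ x ∈ C, ∀ y ∈ C, x * y = y * x) (p₀ p₁ : ℕ) :
    (∀ m ∈ FM (M := M) C p₀, ∀ a ∈ FA C p₁,
        MulOpposite.op a • m ∈ FM (M := M) C (p₀ + p₁) ∧
        a • m ∈ FM (M := M) C (p₀ + p₁)) ∧
    (∀ x ∈ FA C p₀, ∀ y ∈ FA C p₁, x * y ∈ FA C (p₀ + p₁)) := by
  refine ⟨fun m hm a ha => ⟨fun c hc => ?_, fun c hc => ?_⟩, fun x hx y hy c hc => ?_⟩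
  · exact key_op_smul c (p₀ + p₁) p₀ p₁ rfl m a (hm c hc) (ha c hc)
  · exact key_smul c (p₀ + p₁) p₀ p₁ rfl m a (hm c hc) (ha c hc)
  · have hfun : (adM (M := A) c) = adA c := funext (adM_eq_adA c)
    show (adA c)^[p₀ + p₁ + 1] (x * y) = 0
    rw [← hfun, ← op_smul_eq_mul]
    exact key_op_smul c (p₀ + p₁) p₀ p₁ rfl x y (by rw [hfun]; exact hx c hc) (hy c hc)
end

section
/- Let R be a commutative ℚ-algebra, A an associative unital R-algebra, C a maximal commutative R-subalgebra of A, and M an A-bimodule symmetric over R. Then for all p₀, p₁ ∈ ℕ: if m ∈ F^C_{p₀} M and a ∈ F^C_{p₁} A, then the commutator m·a − a·m belongs to F^C_{p₀+p₁−1} M (where F^C_{−1} M = 0 when p₀ = p₁ = 0). In particular (taking M = A), [F^C_{p₀}A, F^C_{p₁}A] ⊆ F^C_{p₀+p₁−1}A, so the associated graded algebra of the filtration F^C on A is commutative. -/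
/-!
Since `ad_c` is a derivation for the bracket, `ad_c^{p₀+p₁} [m, a]` equals
`ad_c^{p₀+p₁-1} [ad_c m, a] + ad_c^{p₀+p₁-1} [m, ad_c a]`, and induction on `p₀ + p₁` reduces to
`p₀ = p₁ = 0`: then `a` commutes with `C`, so lies in `C` by maximality, and `m` commutes with it.

The induction needs `ad_c` to map `F_{p+1}` into `F_p`, which is polarization: for commuting
`c, d ∈ C`, `ad_{k c + d}^{p+1} x` is a polynomial in `k ∈ ℕ` with linear coefficient
`(p + 1) ad_c ad_d^p x`. It vanishes for every `k`, so all its coefficients vanish (Vandermonde),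
as `M` has no torsion, being a `ℚ`-module.
-/

variable {R A M : Type*} [CommRing R] [Algebra ℚ R] [Ring A] [Algebra R A]
  [AddCommGroup M] [Module A M] [Module Aᵐᵒᵖ M] [SMulCommClass A Aᵐᵒᵖ M]
  [Module R M] [IsScalarTower R A M] [IsScalarTower R Aᵐᵒᵖ M]

/-- The commutator `[m, a] = m·a − a·m` of `m ∈ M` and `a ∈ A`. -/
def brkt (m : M) (a : A) : M := MulOpposite.op a • m - a • m

/-- The `ℤ`-indexed filtration `F^C_n M`; for `n = −1` it is `{0}`. -/
def FMz (C : Subalgebra R A) (n : ℤ) : Set M :=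
  {m | ∀ c ∈ C, (adM c)^[(n + 1).toNat] m = 0}

/-- The `ℤ`-indexed filtration `F^C_n A`; for `n = −1` it is `{0}`. -/
def FAz (C : Subalgebra R A) (n : ℤ) : Set A :=
  {a | ∀ c ∈ C, (adA c)^[(n + 1).toNat] a = 0}

open MulOpposite Finset

theorem eq_zero_of_forall_sum_pow_smul_eq_zero {G : Type*} [AddCommGroup G] [IsAddTorsionFree G]
    {n : ℕ} {v : ℕ → G} (h : ∀ k : ℕ, ∑ i ∈ range n, k ^ i • v i = 0) {i : ℕ} (hi : i < n) :
    v i = 0 := by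
  set V := Matrix.vandermonde fun k : Fin n ↦ (k : ℤ)
  have hV : V.det ≠ 0 :=
    Matrix.det_vandermonde_ne_zero_iff.2 fun a b hab ↦ Fin.ext (by exact_mod_cast hab)
  have hrow : ∀ k, ∑ j, V k j • v j = 0 := fun k ↦ by
    simp only [V, Matrix.vandermonde_apply, ← Nat.cast_pow, natCast_zsmul]
    rw [Fin.sum_univ_eq_sum_range (fun j ↦ (k : ℕ) ^ j • v j)]
    exact h k
  have : V.det • v i = 0 := calc
    V.det • v i = ∑ j, (V.adjugate * V) ⟨i, hi⟩ j • v j := by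
      simp [Matrix.adjugate_mul, Matrix.one_apply, ite_smul]
    _ = ∑ k, V.adjugate ⟨i, hi⟩ k • ∑ j, V k j • v j := by
      simp only [Matrix.mul_apply, sum_smul, smul_sum, mul_smul]
      exact sum_comm
    _ = 0 := by simp [hrow]
  exact (smul_eq_zero.1 this).resolve_left hV

def adHom : A →+ AddMonoid.End M :=
  (Module.toAddMonoidEnd A M : A →+ AddMonoid.End M) -
    (Module.toAddMonoidEnd Aᵐᵒᵖ M : Aᵐᵒᵖ →+ AddMonoid.End M).comp opAddEquiv.toAddMonoidHom

omit [SMulCommClass A Aᵐᵒᵖ M] in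
theorem coe_adHom (c : A) : ⇑(adHom c : AddMonoid.End M) = adM c := rfl

omit [SMulCommClass A Aᵐᵒᵖ M] in
theorem coe_adHom_pow (c : A) (n : ℕ) : ⇑(adHom c ^ n : AddMonoid.End M) = (adM c)^[n] := by
  rw [AddMonoid.End.coe_pow, coe_adHom]

theorem commute_adHom {c d : A} (h : Commute c d) :
    Commute (adHom c : AddMonoid.End M) (adHom d) :=
  DFunLike.ext _ _ fun m ↦ by
    change adM c (adM d m) = adM d (adM c m)
    simp only [adM, smul_sub, smul_smul, ← op_mul, h.eq, smul_comm c (op d) m,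
      smul_comm d (op c) m]
    abel

theorem adM_iterate_adM_eq_zero [IsAddTorsionFree M] {S : Type*} [SetLike S A]
    [AddSubmonoidClass S A] {C : S} {p : ℕ} {x : M} (hx : ∀ e ∈ C, (adM e)^[p + 1] x = 0)
    {c d : A} (hc : c ∈ C) (hd : d ∈ C) (hcd : Commute c d) :
    (adM d)^[p] (adM c x) = 0 := by
  set X : AddMonoid.End M := adHom d
  set Y : AddMonoid.End M := adHom c
  have hYX : Commute Y X := commute_adHom hcd
  set v : ℕ → M := fun i ↦ (Y ^ i * X ^ (p + 1 - i) * ((p + 1).choose i : AddMonoid.End M)) x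
  have hv : ∀ k : ℕ, ∑ i ∈ range (p + 2), k ^ i • v i = 0 := fun k ↦ by
    have := hx (k • c + d) (add_mem (nsmul_mem hc k) hd)
    rw [← coe_adHom_pow, map_add, map_nsmul, (hYX.smul_left k).add_pow] at this
    rw [← this]
    erw [AddMonoidHom.finsetSum_apply]
    refine sum_congr rfl fun i _ ↦ ?_
    rw [smul_pow, smul_mul_assoc, smul_mul_assoc]
    rfl
  have h1 := eq_zero_of_forall_sum_pow_smul_eq_zero hv (i := 1) (by omega)
  have h2 : v 1 = (p + 1) • (X ^ p) (Y x) := by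
    simp only [v, pow_one, Nat.choose_one_right, Nat.add_sub_cancel, (hYX.pow_right p).eq]
    change (X ^ p) (Y (((p + 1 : ℕ) : AddMonoid.End M) x)) = _
    rw [AddMonoid.End.natCast_apply, map_nsmul, map_nsmul]
  rw [h2] at h1
  exact (smul_eq_zero.1 h1).resolve_left p.succ_ne_zero

omit [SMulCommClass A Aᵐᵒᵖ M] in
theorem brkt_eq_neg_adM (m : M) (a : A) : brkt m a = -adM a m :=
  (neg_sub _ _).symm

theorem adM_brkt (c a : A) (m : M) :
    adM c (brkt m a) = brkt (adM c m) a + brkt m (adA c a) := by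
  simp only [adM, brkt, adA, smul_sub, sub_smul, op_sub, op_mul, mul_smul, smul_comm a (op c) m,
    smul_comm c (op a) m]
  abel

theorem adM_iterate_brkt_eq_zero [IsAddTorsionFree M] [IsAddTorsionFree A] {S : Type*}
    [SetLike S A] [AddSubmonoidClass S A] {C : S} (hC : ∀ x ∈ C, ∀ y ∈ C, x * y = y * x)
    (hmax : ∀ a : A, (∀ c ∈ C, c * a = a * c) → a ∈ C) {p₀ p₁ : ℕ} {m : M} {a : A}
    (hm : ∀ c ∈ C, (adM c)^[p₀ + 1] m = 0) (ha : ∀ c ∈ C, (adA c)^[p₁ + 1] a = 0)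
    {c : A} (hc : c ∈ C) :
    (adM c)^[p₀ + p₁] (brkt m a) = 0 := by
  induction hn : p₀ + p₁ generalizing p₀ p₁ m a with
  | zero =>
    obtain ⟨rfl, rfl⟩ : p₀ = 0 ∧ p₁ = 0 := by omega
    have haC : a ∈ C := hmax a fun d hd ↦ sub_eq_zero.1 (ha d hd)
    simpa [brkt_eq_neg_adM] using hm a haC
  | succ n ih =>
    have left : (adM c)^[n] (brkt (adM c m) a) = 0 := by
      rcases p₀ with _ | p₀
      · rw [show adM c m = 0 from hm c hc, ← coe_adHom]
        simp [brkt]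
      · exact ih (fun d hd ↦ adM_iterate_adM_eq_zero hm hc hd (hC c hc d hd)) ha (by omega)
    have right : (adM c)^[n] (brkt m (adA c a)) = 0 := by
      rcases p₁ with _ | p₁
      · rw [show adA c a = 0 from ha c hc, ← coe_adHom]
        simp [brkt]
      · exact ih hm (fun d hd ↦ adM_iterate_adM_eq_zero (M := A) ha hc hd (hC c hc d hd))
          (by omega)
    rw [Function.iterate_succ_apply, adM_brkt, ← coe_adHom, iterate_map_add, coe_adHom, left,
      right, add_zero]

theorem commutator_lowers_filtration (C : Subalgebra R A)
    (hC : ∀ x ∈ C, ∀ y ∈ C, x * y = y * x)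
    (hmax : ∀ a : A, (∀ c ∈ C, c * a = a * c) → a ∈ C)
    (p₀ p₁ : ℕ) :
    (∀ m ∈ FMz (M := M) C (p₀ : ℤ), ∀ a ∈ FAz C (p₁ : ℤ),
        brkt m a ∈ FMz (M := M) C ((p₀ : ℤ) + (p₁ : ℤ) - 1)) ∧
    (∀ x ∈ FAz C (p₀ : ℤ), ∀ y ∈ FAz C (p₁ : ℤ),
        x * y - y * x ∈ FAz C ((p₀ : ℤ) + (p₁ : ℤ) - 1)) := by
  let : Module ℚ M := Module.compHom M (algebraMap ℚ R)
  let : Module ℚ A := Module.compHom A (algebraMap ℚ R)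
  have := IsAddTorsionFree.of_module_rat M
  have := IsAddTorsionFree.of_module_rat A
  have hindex : ((p₀ : ℤ) + p₁ - 1 + 1).toNat = p₀ + p₁ := by omega
  refine ⟨fun m hm a ha c hc ↦ ?_, fun x hx y hy c hc ↦ ?_⟩ <;> rw [hindex]
  · exact adM_iterate_brkt_eq_zero hC hmax hm ha hc
  · exact adM_iterate_brkt_eq_zero (M := A) hC hmax hx hy hc
end

section
/- Let R be a commutative ℚ-algebra, A an associative unital R-algebra, C a maximal commutative R-subalgebra of A, and M an A-bimodule symmetric over R. If m ∈ F^C_p M and c_1, …, c_i ∈ C with i ≤ p, then ad_{c_1}(ad_{c_2}(⋯ ad_{c_i}(m)⋯)) ∈ F^C_{p−i} M; i.e., each application of an operator ad_c with c ∈ C lowers the filtration degree by at least one. -/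
/- STATEMENT 8: Over a commutative `ℚ`-algebra `R`, with `C` maximal commutative in `A`
and `M` an `A`-bimodule symmetric over `R`: if `m ∈ F^C_p M` and `c_1, …, c_i ∈ C` with
`i ≤ p`, then `ad_{c_1}(⋯ ad_{c_i}(m)⋯) ∈ F^C_{p−i} M`. -/

variable {R A M : Type*} [CommRing R] [Algebra ℚ R] [Ring A] [Algebra R A]
  [AddCommGroup M] [Module A M] [Module Aᵐᵒᵖ M] [SMulCommClass A Aᵐᵒᵖ M]
  [Module R M] [IsScalarTower R A M] [IsScalarTower R Aᵐᵒᵖ M]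

/-! Polarization. For commuting `c, d ∈ C` and every `n : ℕ`, `d + n • c ∈ C`, so
`ad_{n c + d}^{k+1} m = 0` for `m ∈ F^C_k`. Since `ad_c` and `ad_d` commute, the binomial theorem
makes the left side a polynomial in `n` whose coefficient of `n` is `(k+1) • ad_d^k (ad_c m)`; a
polynomial vanishing at all naturals is zero, and `M` is a `ℚ`-vector space, so
`ad_c m ∈ F^C_{k-1}`. For `k = 0` this reads `ad_c m = 0`, so `F^C_0` is stable under every
`ad_c`, and truncated subtraction in `p - i` is harmless. -/

section Polarization

open Finset Polynomial

variable {V : Type*} [AddCommGroup V] [Module ℚ V]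

theorem eq_zero_of_forall_sum_pow_nsmul_eq_zero {N : ℕ} {v : ℕ → V}
    (h : ∀ n : ℕ, ∑ j ∈ range N, n ^ j • v j = 0) {j : ℕ} (hj : j < N) : v j = 0 := by
  refine (Module.forall_dual_apply_eq_zero_iff ℚ (v j)).mp fun φ ↦ ?_
  have hP : ∑ i ∈ range N, C (φ (v i)) * X ^ i = 0 := by
    refine eq_zero_of_infinite_isRoot _ (Set.infinite_of_injective_forall_mem
      Nat.cast_injective fun n : ℕ ↦ ?_)
    have := congrArg φ (h n)
    simp only [map_sum, map_nsmul, map_zero, nsmul_eq_mul, Nat.cast_pow] at this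
    simp only [Set.mem_ofPred_eq, IsRoot, eval_finsetSum, eval_mul, eval_C, eval_pow, eval_X]
    simpa only [mul_comm] using this
  simpa [finsetSum_coeff, coeff_C_mul_X_pow, hj] using congrArg (coeff · j) hP

theorem Commute.pow_apply_eq_zero_of_forall_pow_add_nsmul_apply_eq_zero {R : Type*} [Semiring R]
    [Module R V] {S T : Module.End R V} (hST : Commute S T) {k : ℕ} {m : V}
    (h : ∀ n : ℕ, ((n • S + T) ^ (k + 1)) m = 0) : (T ^ k) (S m) = 0 := by
  have hexpand : ∀ n : ℕ, ((n • S + T) ^ (k + 1)) m =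
      ∑ i ∈ range (k + 2), n ^ i • ((k + 1).choose i • (S ^ i * T ^ (k + 1 - i)) m) := by
    intro n
    rw [(hST.smul_left n).add_pow, LinearMap.sum_apply]
    refine sum_congr rfl fun i _ ↦ ?_
    rw [_root_.smul_pow, smul_mul_assoc, smul_mul_assoc]
    simp only [Module.End.mul_apply, LinearMap.smul_apply, Module.End.natCast_apply, map_nsmul]
  have hlinear := eq_zero_of_forall_sum_pow_nsmul_eq_zero (fun n ↦ (hexpand n).symm.trans (h n))
    (j := 1) (by omega)
  rw [Nat.choose_one_right, pow_one, Nat.add_sub_cancel, (hST.pow_right k).eq,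
    ← Nat.cast_smul_eq_nsmul ℚ] at hlinear
  exact (smul_eq_zero.mp hlinear).resolve_left (by positivity)

end Polarization

variable (R) in
def adEnd : A →ₗ[R] Module.End R M :=
  (Algebra.lsmul R R M).toLinearMap -
    (Algebra.lsmul R R M).toLinearMap ∘ₗ (MulOpposite.opLinearEquiv R : A ≃ₗ[R] Aᵐᵒᵖ).toLinearMap

theorem commute_adEnd {R A M : Type*} [CommRing R] [Ring A] [Algebra R A] [AddCommGroup M]
    [Module A M] [Module Aᵐᵒᵖ M] [SMulCommClass A Aᵐᵒᵖ M] [Module R M] [IsScalarTower R A M]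
    [IsScalarTower R Aᵐᵒᵖ M] {a b : A} (h : Commute a b) :
    Commute (adEnd R a : Module.End R M) (adEnd R b) := by
  have hLR : ∀ x y : A, Commute (Algebra.lsmul R R M x) (Algebra.lsmul R R M (MulOpposite.op y)) :=
    fun x y ↦ LinearMap.ext fun m ↦ smul_comm x (MulOpposite.op y) m
  exact ((h.map _).sub_right (hLR a b)).sub_left (((hLR b a).symm).sub_right (h.op.map _))

theorem adM_mem_FM_sub_one {C : Subalgebra R A} (hC : ∀ x ∈ C, ∀ y ∈ C, x * y = y * x) {k : ℕ}
    {m : M} (hm : m ∈ FM C k) {c : A} (hc : c ∈ C) : adM c m ∈ FM C (k - 1) := by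
  let : Module ℚ M := Module.compHom M (algebraMap ℚ R)
  intro d hd
  cases k with
  | zero =>
    have hcm : adM c m = 0 := hm c hc
    change adM d (adM c m) = 0
    rw [hcm, adM, smul_zero, smul_zero, sub_zero]
  | succ k =>
    have hkey : (adEnd R d ^ (k + 1)) (adEnd R c m) = 0 := by
      refine (commute_adEnd (hC c hc d hd)).pow_apply_eq_zero_of_forall_pow_add_nsmul_apply_eq_zero
        fun n ↦ ?_
      rw [← map_nsmul, ← map_add, Module.End.pow_apply]
      exact hm _ (add_mem (nsmul_mem hc n) hd)
    rwa [Module.End.pow_apply] at hkey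

theorem adIter_mem_FM {C : Subalgebra R A} (hC : ∀ x ∈ C, ∀ y ∈ C, x * y = y * x) {p : ℕ}
    {m : M} (hm : m ∈ FM C p) (l : List A) (hl : ∀ a ∈ l, a ∈ C) :
    adIter l m ∈ FM C (p - l.length) := by
  induction l with
  | nil => exact hm
  | cons a l ih =>
    rw [List.length_cons, ← Nat.sub_sub]
    exact adM_mem_FM_sub_one hC (ih fun b hb ↦ hl b (List.mem_cons_of_mem a hb))
      (hl a List.mem_cons_self)

theorem adIter_lowers_filtration_general (C : Subalgebra R A)
    (hC : ∀ x ∈ C, ∀ y ∈ C, x * y = y * x)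
    (p i : ℕ)
    (m : M) (hm : m ∈ FM (M := M) C p)
    (c : Fin i → A) (hc : ∀ j, c j ∈ C) :
    adIter (List.ofFn c) m ∈ FM (M := M) C (p - i) := by
  simpa using adIter_mem_FM hC hm (List.ofFn c) (by simpa [List.mem_ofFn] using hc)

theorem adIter_lowers_filtration (C : Subalgebra R A)
    (hC : ∀ x ∈ C, ∀ y ∈ C, x * y = y * x)
    (hmax : ∀ a : A, (∀ c ∈ C, c * a = a * c) → a ∈ C)
    (p i : ℕ) (hip : i ≤ p)
    (m : M) (hm : m ∈ FM (M := M) C p)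
    (c : Fin i → A) (hc : ∀ j, c j ∈ C) :
    adIter (List.ofFn c) m ∈ FM (M := M) C (p - i) :=
  adIter_lowers_filtration_general C hC p i m hm c hc
end

section
/- Let R be a commutative ℚ-algebra, A an associative unital R-algebra, and C a maximal commutative R-subalgebra of A. Then the differential hull D^C A := ⋃_{p ≥ 0} F^C_p A = {a ∈ A | ∃ p, ∀ c ∈ C, ad_c^{p+1}(a) = 0} is an R-subalgebra of A containing C. -/
/- STATEMENT 9: Over a commutative `ℚ`-algebra `R`, with `C` a maximal commutative
subalgebra of `A`, the differential hull
`D^C A = ⋃_p F^C_p A = {a | ∃ p, ∀ c ∈ C, ad_c^{p+1}(a) = 0}`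
is an `R`-subalgebra of `A` containing `C`. -/

variable {R A : Type*} [CommRing R] [Algebra ℚ R] [Ring A] [Algebra R A]

lemma adA_zero (c : A) : adA c 0 = 0 := by simp [adA]

lemma adA_iter_zero (c : A) (n : ℕ) : (adA c)^[n] 0 = 0 :=
  Function.iterate_fixed (adA_zero c) n

lemma adA_add (c x y : A) : adA c (x + y) = adA c x + adA c y := by
  simp only [adA]; noncomm_ring

lemma adA_iter_add (c : A) (n : ℕ) (x y : A) :
    (adA c)^[n] (x + y) = (adA c)^[n] x + (adA c)^[n] y := by
  induction n generalizing x y with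
  | zero => simp
  | succ n ih => simp [Function.iterate_succ_apply, adA_add, ih]

lemma adA_leibniz (c x y : A) : adA c (x * y) = adA c x * y + x * adA c y := by
  simp only [adA]; noncomm_ring

lemma adA_iter_eventually (c : A) {m n : ℕ} (h : m ≤ n) {a : A}
    (ha : (adA c)^[m] a = 0) : (adA c)^[n] a = 0 := by
  obtain ⟨k, rfl⟩ := Nat.exists_eq_add_of_le h
  rw [add_comm, Function.iterate_add_apply, ha, adA_iter_zero]

lemma adA_iter_mul (c : A) :
    ∀ n p q a b, p + q ≤ n → (adA c)^[p + 1] a = 0 → (adA c)^[q + 1] b = 0 →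
      (adA c)^[p + q + 1] (a * b) = 0 := by
  intro n
  induction n with
  | zero =>
    intro p q a b h hp hq
    obtain ⟨rfl, rfl⟩ : p = 0 ∧ q = 0 := by omega
    simp only [zero_add, Function.iterate_one] at hp hq ⊢
    rw [adA_leibniz, hp, hq, zero_mul, mul_zero, add_zero]
  | succ n ih =>
    intro p q a b h hp hq
    rw [Function.iterate_succ_apply, adA_leibniz, adA_iter_add]
    have h1 : (adA c)^[p + q] (adA c a * b) = 0 := by
      cases p with
      | zero =>
        simp only [zero_add, Function.iterate_one] at hp
        rw [hp, zero_mul, adA_iter_zero]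
      | succ p' =>
        have hp' : (adA c)^[p' + 1] (adA c a) = 0 := by
          rw [← Function.iterate_succ_apply]; exact hp
        rw [show p' + 1 + q = p' + q + 1 from by omega]
        exact ih p' q (adA c a) b (by omega) hp' hq
    have h2 : (adA c)^[p + q] (a * adA c b) = 0 := by
      cases q with
      | zero =>
        simp only [zero_add, Function.iterate_one] at hq
        rw [hq, mul_zero, adA_iter_zero]
      | succ q' =>
        have hq' : (adA c)^[q' + 1] (adA c b) = 0 := by
          rw [← Function.iterate_succ_apply]; exact hq
        rw [show p + (q' + 1) = p + q' + 1 from by omega]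
        exact ih p q' a (adA c b) (by omega) hp hq'
    rw [h1, h2, add_zero]

theorem differentialHull_isSubalgebra (C : Subalgebra R A)
    (hC : ∀ x ∈ C, ∀ y ∈ C, x * y = y * x)
    (hmax : ∀ a : A, (∀ c ∈ C, c * a = a * c) → a ∈ C) :
    ∃ D : Subalgebra R A,
      (D : Set A) = {a : A | ∃ p : ℕ, ∀ c ∈ C, (adA c)^[p + 1] a = 0} ∧ C ≤ D := by
  refine ⟨{
    carrier := {a : A | ∃ p : ℕ, ∀ c ∈ C, (adA c)^[p + 1] a = 0}
    mul_mem' := ?_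
    one_mem' := ?_
    add_mem' := ?_
    zero_mem' := ?_
    algebraMap_mem' := ?_ }, rfl, ?_⟩
  · rintro a b ⟨p, hp⟩ ⟨q, hq⟩
    exact ⟨p + q, fun c hc => adA_iter_mul c (p + q) p q a b le_rfl (hp c hc) (hq c hc)⟩
  · exact ⟨0, fun c hc => by simp [adA]⟩
  · rintro a b ⟨p, hp⟩ ⟨q, hq⟩
    refine ⟨max p q, fun c hc => ?_⟩
    rw [adA_iter_add, adA_iter_eventually c (by omega) (hp c hc),
      adA_iter_eventually c (by omega) (hq c hc), add_zero]
  · exact ⟨0, fun c hc => by simp [adA]⟩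
  · intro r
    exact ⟨0, fun c hc => by simp [adA, Algebra.commutes]⟩
  · intro x hx
    exact ⟨0, fun c hc => by simp [adA, hC c hc x hx]⟩
end

section
/- Let R be a commutative ℚ-algebra, A an associative unital R-algebra, and C a maximal commutative R-subalgebra of A. For a ∈ F^C_{p₀} A, a' ∈ F^C_{p₁} A and any c ∈ C one has ad_c^{p₀+p₁}(a·a') = binom(p₀+p₁, p₀) · ad_c^{p₀}(a) · ad_c^{p₁}(a'); i.e., the principal symbol of a product is the product of the principal symbols (up to the binomial normalization). -/
/- STATEMENT 13: Over a commutative `ℚ`-algebra `R`, with `C` maximal commutative in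
`A`: for `a ∈ F^C_{p₀} A`, `a' ∈ F^C_{p₁} A` and `c ∈ C`,
`ad_c^{p₀+p₁}(a·a') = binom(p₀+p₁, p₀) · ad_c^{p₀}(a) · ad_c^{p₁}(a')`. -/

variable {R A : Type*} [CommRing R] [Algebra ℚ R] [Ring A] [Algebra R A]

/-! `ad_c` is a derivation of `A`, so its iterates obey the general Leibniz rule. In the
expansion of `ad_c^{p₀+p₁}(a a')` every term `ad_c^i(a) ad_c^j(a')` with `i + j = p₀ + p₁`
has `i > p₀` or `j > p₁`, hence vanishes, except the one with `(i, j) = (p₀, p₁)`. -/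

open Finset

section Leibniz

variable {S : Type*} [NonUnitalNonAssocSemiring S]

theorem AddMonoidHom.iterate_map_mul_eq_sum_antidiagonal (D : S →+ S)
    (hD : ∀ x y, D (x * y) = D x * y + x * D y) (n : ℕ) (x y : S) :
    D^[n] (x * y) = ∑ ij ∈ antidiagonal n, n.choose ij.1 • (D^[ij.1] x * D^[ij.2] y) := by
  induction n with
  | zero => simp
  | succ n ih =>
    rw [sum_antidiagonal_choose_succ_nsmul (fun i j => D^[i] x * D^[j] y) n]
    simp only [Function.iterate_succ_apply', ih, map_sum, map_nsmul, hD, smul_add,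
      sum_add_distrib, add_comm (∑ ij ∈ antidiagonal n, n.choose ij.1 • (D^[ij.1] x * _))]
    congr 1
    refine sum_congr rfl fun ⟨i, j⟩ hij ↦ ?_
    rw [n.choose_symm_of_eq_add (HasAntidiagonal.mem_antidiagonal.1 hij).symm]

theorem AddMonoidHom.iterate_map_eq_zero_of_le (D : S →+ S) {x : S} {m k : ℕ}
    (h : D^[m] x = 0) (hmk : m ≤ k) : D^[k] x = 0 := by
  obtain ⟨j, rfl⟩ := Nat.exists_eq_add_of_le hmk
  rw [add_comm, Function.iterate_add_apply, h, iterate_map_zero]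

theorem AddMonoidHom.iterate_map_mul_of_iterate_succ_eq_zero (D : S →+ S)
    (hD : ∀ x y, D (x * y) = D x * y + x * D y) {p q : ℕ} {x y : S}
    (hx : D^[p + 1] x = 0) (hy : D^[q + 1] y = 0) :
    D^[p + q] (x * y) = (p + q).choose p • (D^[p] x * D^[q] y) := by
  rw [D.iterate_map_mul_eq_sum_antidiagonal hD,
    sum_eq_single_of_mem (p, q) (HasAntidiagonal.mem_antidiagonal.2 rfl)]
  rintro ⟨i, j⟩ hij hne
  simp only [HasAntidiagonal.mem_antidiagonal] at hij ⊢
  have : p < i ∨ q < j := by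
    by_contra! h
    exact hne (Prod.ext (by omega) (by omega))
  rcases this with hi | hj
  · rw [D.iterate_map_eq_zero_of_le hx hi, zero_mul, smul_zero]
  · rw [D.iterate_map_eq_zero_of_le hy hj, mul_zero, smul_zero]

end Leibniz

def adAddHom (c : A) : A →+ A := AddMonoidHom.mulLeft c - AddMonoidHom.mulRight c

theorem coe_adAddHom (c : A) : ⇑(adAddHom c) = adA c := rfl

theorem adAddHom_mul (c x y : A) :
    adAddHom c (x * y) = adAddHom c x * y + x * adAddHom c y := by
  simp only [coe_adAddHom, adA]
  noncomm_ring

theorem principal_symbol_of_product_general (C : Subalgebra R A)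
    (p₀ p₁ : ℕ) (a a' : A)
    (ha : ∀ c ∈ C, (adA c)^[p₀ + 1] a = 0)
    (ha' : ∀ c ∈ C, (adA c)^[p₁ + 1] a' = 0)
    (c : A) (hcC : c ∈ C) :
    (adA c)^[p₀ + p₁] (a * a') =
      (p₀ + p₁).choose p₀ • ((adA c)^[p₀] a * (adA c)^[p₁] a') := by
  have hac := ha c hcC
  have hac' := ha' c hcC
  rw [← coe_adAddHom] at hac hac' ⊢
  exact (adAddHom c).iterate_map_mul_of_iterate_succ_eq_zero (adAddHom_mul c) hac hac'

theorem principal_symbol_of_product (C : Subalgebra R A)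
    (hC : ∀ x ∈ C, ∀ y ∈ C, x * y = y * x)
    (hmax : ∀ a : A, (∀ c ∈ C, c * a = a * c) → a ∈ C)
    (p₀ p₁ : ℕ) (a a' : A)
    (ha : ∀ c ∈ C, (adA c)^[p₀ + 1] a = 0)
    (ha' : ∀ c ∈ C, (adA c)^[p₁ + 1] a' = 0)
    (c : A) (hcC : c ∈ C) :
    (adA c)^[p₀ + p₁] (a * a') =
      (p₀ + p₁).choose p₀ • ((adA c)^[p₀] a * (adA c)^[p₁] a') :=
  principal_symbol_of_product_general C p₀ p₁ a a' ha ha' c hcC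
end
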